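/- arXiv:2004.05042 — 3 statements merged into one kernel-verified Lean document; each statement's English description precedes it below -/
import Mathlib

section
/- Fix integers g ≥ 2, n ≥ 0, S ≥ 0, and T ≥ 1; set E = S + T and assume E ≤ 3g + n − 3. Let g₁, g₂, s₁, s₂, n₁, n₂ ≥ 0 be integers with g₁ + g₂ = g − E + 1, s₁ + s₂ = S, n₁ + n₂ = n, and 2g_i + 2s_i + n_i + T ≥ 3 for each i ∈ {1, 2}. Then ∏_{i=1}^2 (6g_i + 4s_i + 2n_i + 2T − 5)! / ((3g_i + 2s_i + n_i + T − 3)! · g_i! · s_i!) ≤ 64 · (E + 1) · (6g + 2n − 2E − 5)! / ((3g + n − E − 3)! · (g − E + 1)! · S!). -/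
open Nat

private lemma vander (a b c d : ℕ) : a.choose c * b.choose d ≤ (a + b).choose (c + d) := by
  rw [Nat.add_choose_eq]
  have hmem : ((c, d) : ℕ × ℕ) ∈ Finset.HasAntidiagonal.antidiagonal (c + d) :=
    Finset.HasAntidiagonal.mem_antidiagonal.mpr rfl
  exact Finset.single_le_sum (f := fun ij : ℕ × ℕ => a.choose ij.1 * b.choose ij.2)
    (fun i _ => Nat.zero_le _) hmem

set_option maxHeartbeats 2000000 in
private lemma LD (a : ℕ) : ∀ b : ℕ,
    (2*a+1)! * (2*b+1)! * ((a+b+1)! * (a+b)!) ≤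
      (2*(a+b)+1)! * (a ! * (a+1)! * (b ! * (b+1)!)) := by
  intro b
  induction b with
  | zero =>
    apply le_of_eq
    show (2*a+1)! * 1! * ((a+1)! * a !) = (2*a+1)! * (a ! * (a+1)! * (0! * 1!))
    rw [Nat.factorial_one, Nat.factorial_zero]
    ring
  | succ b ih =>
    have e1 : (2*(b+1)+1)! = (2*b+2) * (2*b+3) * (2*b+1)! := by
      have h : 2*(b+1)+1 = (2*b+1)+1+1 := by ring
      rw [h, Nat.factorial_succ, Nat.factorial_succ]; ring
    have e2 : (a+(b+1)+1)! = (a+b+2) * (a+b+1)! := by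
      have h : a+(b+1)+1 = (a+b+1)+1 := by ring
      rw [h, Nat.factorial_succ]
    have e3 : (a+(b+1))! = (a+b+1) * (a+b)! := by
      have h : a+(b+1) = (a+b)+1 := by ring
      rw [h, Nat.factorial_succ]
    have e4 : (2*(a+(b+1))+1)! = (2*(a+b)+2) * (2*(a+b)+3) * (2*(a+b)+1)! := by
      have h : 2*(a+(b+1))+1 = (2*(a+b)+1)+1+1 := by ring
      rw [h, Nat.factorial_succ, Nat.factorial_succ]; ring
    have e5 : (b+1)! = (b+1) * b ! := Nat.factorial_succ b
    have e6 : (b+1+1)! = (b+2) * (b+1)! := Nat.factorial_succ (b+1)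
    have hfac : (2*b+2) * (2*b+3) * ((a+b+2) * (a+b+1)) ≤
        (2*(a+b)+2) * (2*(a+b)+3) * ((b+1) * (b+2)) := by
      have hid : (2*(a+b)+2) * (2*(a+b)+3) * ((b+1) * (b+2)) =
          (2*b+2) * (2*b+3) * ((a+b+2) * (a+b+1)) + 2*(b+1)*(a+b+1)*a := by ring
      omega
    calc (2*a+1)! * (2*(b+1)+1)! * ((a+(b+1)+1)! * (a+(b+1))!)
        = ((2*b+2) * (2*b+3) * ((a+b+2) * (a+b+1))) *
            ((2*a+1)! * (2*b+1)! * ((a+b+1)! * (a+b)!)) := by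
          rw [e1, e2, e3]; ring
      _ ≤ ((2*(a+b)+2) * (2*(a+b)+3) * ((b+1) * (b+2))) *
            ((2*(a+b)+1)! * (a ! * (a+1)! * (b ! * (b+1)!))) :=
          Nat.mul_le_mul hfac ih
      _ = (2*(a+(b+1))+1)! * (a ! * (a+1)! * ((b+1)! * (b+1+1)!)) := by
          rw [e4, e6, e5]; ring

set_option maxHeartbeats 2000000 in
/-- With `E = S + T ≤ 3g + n − 3`, `g₁ + g₂ = g − E + 1`,
`s₁ + s₂ = S`, `n₁ + n₂ = n`, and `2gᵢ + 2sᵢ + nᵢ + T ≥ 3` for `i = 1, 2`: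
`∏_{i=1}^2 (6gᵢ+4sᵢ+2nᵢ+2T−5)!/((3gᵢ+2sᵢ+nᵢ+T−3)! gᵢ! sᵢ!)
  ≤ 64 (E+1) (6g+2n−2E−5)!/((3g+n−E−3)! (g−E+1)! S!)`. -/
theorem stmt17 (g n S T : ℕ) (hg : 2 ≤ g) (hT : 1 ≤ T)
    (hE : S + T + 3 ≤ 3 * g + n)
    (g₁ g₂ s₁ s₂ n₁ n₂ : ℕ)
    (hgsum : g₁ + g₂ + (S + T) = g + 1)
    (hssum : s₁ + s₂ = S) (hnsum : n₁ + n₂ = n)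
    (h1 : 3 ≤ 2 * g₁ + 2 * s₁ + n₁ + T) (h2 : 3 ≤ 2 * g₂ + 2 * s₂ + n₂ + T) :
    (Nat.factorial (6 * g₁ + 4 * s₁ + 2 * n₁ + 2 * T - 5) : ℝ) /
        ((Nat.factorial (3 * g₁ + 2 * s₁ + n₁ + T - 3) : ℝ) *
          (Nat.factorial g₁ : ℝ) * (Nat.factorial s₁ : ℝ)) *
      ((Nat.factorial (6 * g₂ + 4 * s₂ + 2 * n₂ + 2 * T - 5) : ℝ) /
        ((Nat.factorial (3 * g₂ + 2 * s₂ + n₂ + T - 3) : ℝ) *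
          (Nat.factorial g₂ : ℝ) * (Nat.factorial s₂ : ℝ))) ≤
      64 * ((S : ℝ) + (T : ℝ) + 1) *
        (Nat.factorial (6 * g + 2 * n - 2 * (S + T) - 5) : ℝ) /
        ((Nat.factorial (3 * g + n - (S + T) - 3) : ℝ) *
          (Nat.factorial (g + 1 - (S + T)) : ℝ) * (Nat.factorial S : ℝ)) := by
  obtain ⟨a₁, ha₁⟩ : ∃ a, 3*g₁+2*s₁+n₁+T = a + 3 := ⟨3*g₁+2*s₁+n₁+T-3, by omega⟩
  obtain ⟨a₂, ha₂⟩ : ∃ a, 3*g₂+2*s₂+n₂+T = a + 3 := ⟨3*g₂+2*s₂+n₂+T-3, by omega⟩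
  have e1 : 6*g₁+4*s₁+2*n₁+2*T-5 = 2*a₁+1 := by omega
  have e2 : 6*g₂+4*s₂+2*n₂+2*T-5 = 2*a₂+1 := by omega
  have e3 : 3*g₁+2*s₁+n₁+T-3 = a₁ := by omega
  have e4 : 3*g₂+2*s₂+n₂+T-3 = a₂ := by omega
  have e5 : 6*g+2*n-2*(S+T)-5 = 2*(a₁+a₂)+1 := by omega
  have e6 : 3*g+n-(S+T)-3 = a₁+a₂ := by omega
  have e7 : g+1-(S+T) = g₁+g₂ := by omega
  rw [e1, e2, e3, e4, e5, e6, e7]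
  -- the key combinatorial inequality
  have key : (a₁+1)! * (a₂+1)! * ((g₁+g₂)! * S !) ≤
      64*(S+T+1) * ((a₁+a₂+1)! * (g₁ ! * g₂ ! * (s₁ ! * s₂ !))) := by
    by_cases hc1 : g₁ + s₁ ≤ a₁
    · by_cases hc2 : g₂ + s₂ ≤ a₂
      · -- main case: both indices non-deficient
        obtain ⟨c₁, hcc₁⟩ : ∃ c, a₁ = g₁ + s₁ + c := ⟨a₁ - g₁ - s₁, by omega⟩
        obtain ⟨c₂, hcc₂⟩ : ∃ c, a₂ = g₂ + s₂ + c := ⟨a₂ - g₂ - s₂, by omega⟩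
        have hv1 : (g₁+g₂).choose g₁ * (s₁+s₂).choose s₁ ≤
            ((g₁+g₂)+(s₁+s₂)).choose (g₁+s₁) := vander _ _ _ _
        have hv2 : ((g₁+g₂)+(s₁+s₂)).choose (g₁+s₁) * (c₁+c₂+1).choose (c₁+1) ≤
            (a₁+a₂+1).choose (a₁+1) := by
          have h := vander ((g₁+g₂)+(s₁+s₂)) (c₁+c₂+1) (g₁+s₁) (c₁+1)
          have eA : (g₁+g₂)+(s₁+s₂)+(c₁+c₂+1) = a₁+a₂+1 := by omega
          have ea : g₁+s₁+(c₁+1) = a₁+1 := by omega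
          rwa [eA, ea] at h
        have hm : c₂+1 ≤ (c₁+c₂+1).choose (c₁+1) := by
          have h := vander (1+c₂) c₁ 1 c₁
          simp only [Nat.choose_one_right, Nat.choose_self, mul_one] at h
          have eA : 1+c₂+c₁ = c₁+c₂+1 := by omega
          have ea : 1+c₁ = c₁+1 := by omega
          rw [eA, ea] at h
          omega
        have hlin : a₂+1 ≤ 64*(S+T+1)*(c₂+1) := by
          have hg2 : 2*g₂ ≤ c₂ + 2 := by omega
          have hs2 : s₂ ≤ S := by omega
          have hq : c₂ + (S+T+1) ≤ (S+T+1)*(c₂+1) := by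
            have h0 : 1*c₂ ≤ (S+T+1)*c₂ := Nat.mul_le_mul_right c₂ (by omega)
            have h1 : (S+T+1)*(c₂+1) = (S+T+1)*c₂ + (S+T+1) := by ring
            have h2 : 1*c₂ = c₂ := by ring
            rw [h1]
            exact Nat.add_le_add_right (by omega) _
          calc a₂+1 ≤ 4*(c₂+(S+T+1)) := by omega
            _ ≤ 4*((S+T+1)*(c₂+1)) := Nat.mul_le_mul_left 4 hq
            _ ≤ 64*((S+T+1)*(c₂+1)) := Nat.mul_le_mul_right _ (by omega)
            _ = 64*(S+T+1)*(c₂+1) := by ring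
        have hch : (a₂+1) * ((g₁+g₂).choose g₁ * (s₁+s₂).choose s₁) ≤
            64*(S+T+1) * (a₁+a₂+1).choose (a₁+1) := by
          calc (a₂+1) * ((g₁+g₂).choose g₁ * (s₁+s₂).choose s₁)
              ≤ (64*(S+T+1)*(c₂+1)) * ((g₁+g₂).choose g₁ * (s₁+s₂).choose s₁) :=
                Nat.mul_le_mul_right _ hlin
            _ = 64*(S+T+1) * ((c₂+1) * ((g₁+g₂).choose g₁ * (s₁+s₂).choose s₁)) := by
                ring
            _ ≤ 64*(S+T+1) * ((c₁+c₂+1).choose (c₁+1) *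
                  ((g₁+g₂).choose g₁ * (s₁+s₂).choose s₁)) :=
                Nat.mul_le_mul_left _ (Nat.mul_le_mul_right _ hm)
            _ = 64*(S+T+1) * ((g₁+g₂).choose g₁ * (s₁+s₂).choose s₁ *
                  (c₁+c₂+1).choose (c₁+1)) := by ring
            _ ≤ 64*(S+T+1) * (((g₁+g₂)+(s₁+s₂)).choose (g₁+s₁) *
                  (c₁+c₂+1).choose (c₁+1)) :=
                Nat.mul_le_mul_left _ (Nat.mul_le_mul_right _ hv1)
            _ ≤ 64*(S+T+1) * (a₁+a₂+1).choose (a₁+1) :=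
                Nat.mul_le_mul_left _ hv2
        have egG : (g₁+g₂)! = (g₁+g₂).choose g₁ * g₁ ! * g₂ ! := by
          have h := Nat.choose_mul_factorial_mul_factorial (Nat.le_add_right g₁ g₂)
          simpa using h.symm
        have eS : S ! = (s₁+s₂).choose s₁ * s₁ ! * s₂ ! := by
          have h := Nat.choose_mul_factorial_mul_factorial (Nat.le_add_right s₁ s₂)
          simp only [Nat.add_sub_cancel_left] at h
          rw [← hssum]
          exact h.symm
        have eA : (a₁+a₂+1)! = (a₁+a₂+1).choose (a₁+1) * (a₁+1)! * a₂ ! := by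
          have hle : a₁+1 ≤ a₁+a₂+1 := by omega
          have h := Nat.choose_mul_factorial_mul_factorial hle
          have h' : a₁+a₂+1-(a₁+1) = a₂ := by omega
          rw [h'] at h
          exact h.symm
        calc (a₁+1)! * (a₂+1)! * ((g₁+g₂)! * S !)
            = ((a₂+1) * ((g₁+g₂).choose g₁ * (s₁+s₂).choose s₁)) *
                ((a₁+1)! * a₂ ! * (g₁ ! * g₂ ! * (s₁ ! * s₂ !))) := by
              rw [egG, eS, Nat.factorial_succ a₂]; ring
          _ ≤ (64*(S+T+1) * (a₁+a₂+1).choose (a₁+1)) *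
                ((a₁+1)! * a₂ ! * (g₁ ! * g₂ ! * (s₁ ! * s₂ !))) :=
              Nat.mul_le_mul_right _ hch
          _ = 64*(S+T+1) * ((a₁+a₂+1)! * (g₁ ! * g₂ ! * (s₁ ! * s₂ !))) := by
              rw [eA]; ring
      · -- index 2 deficient
        have hg2 : g₂ = 0 := by omega
        have hs2 : s₂ = 1 := by omega
        have ha2 : a₂ = 0 := by omega
        have hS : S = s₁ + 1 := by omega
        rw [hg2, hs2, ha2, hS]
        calc (a₁+1)! * (0+1)! * ((g₁+0)! * (s₁+1)!)
            = (s₁+1) * ((a₁+0+1)! * (g₁ ! * 0! * (s₁ ! * 1!))) := by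
              simp only [Nat.zero_add, Nat.add_zero, Nat.factorial_one, Nat.factorial_zero,
                Nat.factorial_succ s₁]
              ring
          _ ≤ (64*(s₁+1+T+1)) * ((a₁+0+1)! * (g₁ ! * 0! * (s₁ ! * 1!))) :=
              Nat.mul_le_mul_right _ (by omega)
    · -- index 1 deficient
      have hg1 : g₁ = 0 := by omega
      have hs1 : s₁ = 1 := by omega
      have ha1 : a₁ = 0 := by omega
      have hS : S = 1 + s₂ := by omega
      rw [hg1, hs1, ha1, hS]
      calc (0+1)! * (a₂+1)! * ((0+g₂)! * (1+s₂)!)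
          = (1+s₂) * ((0+a₂+1)! * (0! * g₂ ! * (1! * s₂ !))) := by
            have h' : (1+s₂)! = (1+s₂) * s₂ ! := by
              have hh : 1+s₂ = s₂+1 := by omega
              rw [hh, Nat.factorial_succ]
            simp only [Nat.zero_add, Nat.factorial_one, Nat.factorial_zero, h']
            ring
        _ ≤ (64*(1+s₂+T+1)) * ((0+a₂+1)! * (0! * g₂ ! * (1! * s₂ !))) :=
            Nat.mul_le_mul_right _ (by omega)
  -- assemble the master natural-number inequality
  have I1 := LD a₁ a₂
  have hK : 0 < (a₁+a₂+1)! * ((a₁+1)! * (a₂+1)!) :=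
    Nat.mul_pos (Nat.factorial_pos _) (Nat.mul_pos (Nat.factorial_pos _) (Nat.factorial_pos _))
  have master : (2*a₁+1)! * (2*a₂+1)! * ((a₁+a₂)! * ((g₁+g₂)! * S !)) ≤
      64*(S+T+1) * ((2*(a₁+a₂)+1)! * (a₁ ! * g₁ ! * s₁ ! * (a₂ ! * g₂ ! * s₂ !))) := by
    have hmul := Nat.mul_le_mul I1 key
    have hL : (2*a₁+1)! * (2*a₂+1)! * ((a₁+a₂+1)! * (a₁+a₂)!) *
        ((a₁+1)! * (a₂+1)! * ((g₁+g₂)! * S !)) =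
        ((a₁+a₂+1)! * ((a₁+1)! * (a₂+1)!)) *
          ((2*a₁+1)! * (2*a₂+1)! * ((a₁+a₂)! * ((g₁+g₂)! * S !))) := by ring
    have hR : (2*(a₁+a₂)+1)! * (a₁ ! * (a₁+1)! * (a₂ ! * (a₂+1)!)) *
        (64*(S+T+1) * ((a₁+a₂+1)! * (g₁ ! * g₂ ! * (s₁ ! * s₂ !)))) =
        ((a₁+a₂+1)! * ((a₁+1)! * (a₂+1)!)) *
          (64*(S+T+1) * ((2*(a₁+a₂)+1)! * (a₁ ! * g₁ ! * s₁ ! * (a₂ ! * g₂ ! * s₂ !)))) := by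
      ring
    rw [hL, hR] at hmul
    exact Nat.le_of_mul_le_mul_left hmul hK
  -- pass to the reals
  have hf : ∀ m : ℕ, (0:ℝ) < (m ! : ℝ) := fun m => by
    exact_mod_cast Nat.factorial_pos m
  rw [_root_.div_mul_div_comm, div_le_div_iff₀ (by positivity) (by positivity)]
  have hcast : (((2*a₁+1)! * (2*a₂+1)! * ((a₁+a₂)! * ((g₁+g₂)! * S !)) : ℕ) : ℝ) ≤
      ((64*(S+T+1) * ((2*(a₁+a₂)+1)! * (a₁ ! * g₁ ! * s₁ ! * (a₂ ! * g₂ ! * s₂ !))) : ℕ) : ℝ) :=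
    Nat.cast_le.mpr master
  refine le_trans (le_of_eq ?_) (le_trans hcast (le_of_eq ?_))
  · push_cast
    ring
  · push_cast
    ring
end

section
/- Fix integers g ≥ 2, n ≥ 0, S ≥ 0, and T ≥ 1; set E = S + T and assume E ≤ 3g + n − 3. Let g₁, g₂, s₁, s₂, n₁, n₂ ≥ 0 be integers with g₁ + g₂ = g − E + 1, s₁ + s₂ = S, n₁ + n₂ = n, and 2g_i + 2s_i + n_i + T ≥ 3 for each i ∈ {1, 2}. Let r = min(2g₁ + s₁ + n₁ + T − 3, 2g₂ + s₂ + n₂ + T − 3), and suppose r ≥ r₀ ≥ 0 for some integer r₀. Then ∏_{i=1}^2 (6g_i + 4s_i + 2n_i + 2T − 5)! / ((3g_i + 2s_i + n_i + T − 3)! · g_i! · s_i!) ≤ 2^{r₀+7} · (E + 1) · (2g + n − S − 2)^{−r₀} · (r₀ + 1)! · (6g + 2n − 2E − 5)! / ((3g + n − E − 3)! · (g − E + 1)! · S!). -/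
/-- Single-term Vandermonde bound. -/
lemma cmcl (p : ℕ) : ∀ (i q j : ℕ), p.choose i * q.choose j ≤ (p + q).choose (i + j) := by
  induction p with
  | zero =>
    intro i q j
    cases i with
    | zero => simp
    | succ i => simp [Nat.choose_eq_zero_of_lt]
  | succ p ih =>
    intro i q j
    cases i with
    | zero =>
      simpa using Nat.choose_le_choose j (by omega : q ≤ p + 1 + q)
    | succ i =>
      rw [Nat.choose_succ_succ, Nat.add_mul]
      calc p.choose i * q.choose j + p.choose (i+1) * q.choose j
          ≤ (p+q).choose (i+j) + (p+q).choose (i+1+j) :=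
            Nat.add_le_add (ih i q j) (ih (i+1) q j)
        _ = (p+1+q).choose (i+1+j) := by
            rw [show p+1+q = (p+q)+1 by omega, show i+1+j = (i+j)+1 by omega,
              Nat.choose_succ_succ]

/-- Monotonicity of `choose n` up to the middle. -/
lemma choose_mono_mid {n j k : ℕ} (hjk : j ≤ k) (hk : 2*k ≤ n+1) : n.choose j ≤ n.choose k := by
  induction k with
  | zero => simp [Nat.le_zero.1 hjk]
  | succ k ih =>
    rcases Nat.eq_or_lt_of_le hjk with h | h
    · rw [h]
    · have hj : j ≤ k := by omega
      have step : n.choose k ≤ n.choose (k+1) := by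
        have e := Nat.choose_succ_right_eq n k
        have h1 : n.choose k * (k+1) ≤ n.choose k * (n - k) :=
          Nat.mul_le_mul_left _ (by omega)
        rw [← e] at h1
        exact Nat.le_of_mul_le_mul_right h1 (by omega)
      exact le_trans (ih hj (by omega)) step

lemma pow_bound (r c : ℕ) (h : r ≤ c) :
    3*(r+c+2)^(r+1) ≤ 2^(r+7) * (Nat.factorial (r+1) * (r+c+1).choose (r+1)) := by
  have h2 : (r+c+1).choose (r+1) * Nat.factorial (r+1) * Nat.factorial c
      = Nat.factorial (r+c+1) := by
    have := Nat.choose_mul_factorial_mul_factorial (show r+1 ≤ r+c+1 by omega)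
    rwa [show r+c+1-(r+1) = c from by omega] at this
  have key : (c+1)^(r+1) * Nat.factorial c
      ≤ (Nat.factorial (r+1) * (r+c+1).choose (r+1)) * Nat.factorial c := by
    calc (c+1)^(r+1) * Nat.factorial c = Nat.factorial c * (c+1)^(r+1) := by ring
      _ ≤ Nat.factorial (c+(r+1)) := Nat.factorial_mul_pow_le_factorial
      _ = Nat.factorial (r+c+1) := by rw [show c+(r+1) = r+c+1 from by omega]
      _ = (Nat.factorial (r+1) * (r+c+1).choose (r+1)) * Nat.factorial c := by
          rw [← h2]; ring
  have key2 : (c+1)^(r+1) ≤ Nat.factorial (r+1) * (r+c+1).choose (r+1) :=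
    Nat.le_of_mul_le_mul_right key (Nat.factorial_pos c)
  calc 3*(r+c+2)^(r+1) ≤ 3*(2*(c+1))^(r+1) :=
        Nat.mul_le_mul_left _ (Nat.pow_le_pow_left (by omega) _)
    _ = 3*2^(r+1) * (c+1)^(r+1) := by rw [mul_pow]; ring
    _ ≤ 2^(r+7) * (c+1)^(r+1) := by
        refine Nat.mul_le_mul_right _ ?_
        have e : (2:ℕ)^(r+7) = 2^(r+1)*64 := by rw [pow_add, pow_add]; ring
        rw [e]; omega
    _ ≤ 2^(r+7) * (Nat.factorial (r+1) * (r+c+1).choose (r+1)) :=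
        Nat.mul_le_mul_left _ key2

lemma natkey (g n S T : ℕ) (hT : 1 ≤ T)
    (g₁ g₂ s₁ s₂ n₁ n₂ : ℕ)
    (hgsum : g₁ + g₂ + (S + T) = g + 1)
    (hssum : s₁ + s₂ = S) (hnsum : n₁ + n₂ = n)
    (r₀ : ℕ)
    (hr1 : r₀ + 3 ≤ 2 * g₁ + s₁ + n₁ + T) (hr2 : r₀ + 3 ≤ 2 * g₂ + s₂ + n₂ + T)
    (hw : 2 * g₁ + s₁ + n₁ ≤ 2 * g₂ + s₂ + n₂) :
    Nat.factorial (6 * g₁ + 4 * s₁ + 2 * n₁ + 2 * T - 5) *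
      Nat.factorial (6 * g₂ + 4 * s₂ + 2 * n₂ + 2 * T - 5) *
      Nat.factorial (3 * g + n - (S + T) - 3) *
      Nat.factorial (g + 1 - (S + T)) * Nat.factorial S *
      (2 * g + n - S - 2) ^ r₀ ≤
    2 ^ (r₀ + 7) * (S + T + 1) * Nat.factorial (r₀ + 1) *
      Nat.factorial (6 * g + 2 * n - 2 * (S + T) - 5) *
      (Nat.factorial (3 * g₁ + 2 * s₁ + n₁ + T - 3) *
        Nat.factorial (3 * g₂ + 2 * s₂ + n₂ + T - 3) *
        Nat.factorial g₁ * Nat.factorial g₂ *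
        Nat.factorial s₁ * Nat.factorial s₂) := by
  obtain ⟨a1, ha1⟩ : ∃ a, 3 * g₁ + 2 * s₁ + n₁ + T = a + 3 := ⟨3 * g₁ + 2 * s₁ + n₁ + T - 3, by omega⟩
  obtain ⟨a2, ha2⟩ : ∃ a, 3 * g₂ + 2 * s₂ + n₂ + T = a + 3 := ⟨3 * g₂ + 2 * s₂ + n₂ + T - 3, by omega⟩
  obtain ⟨x1, hx1⟩ : ∃ x, 2 * g₁ + s₁ + n₁ + T = x + 3 := ⟨2 * g₁ + s₁ + n₁ + T - 3, by omega⟩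
  obtain ⟨x2, hx2⟩ : ∃ x, 2 * g₂ + s₂ + n₂ + T = x + 3 := ⟨2 * g₂ + s₂ + n₂ + T - 3, by omega⟩
  have hxr1 : r₀ ≤ x1 := by omega
  have hxr2 : r₀ ≤ x2 := by omega
  have hxw : x1 ≤ x2 := by omega
  have ea1 : a1 = x1 + (g₁ + s₁) := by omega
  have ea2 : a2 = x2 + (g₂ + s₂) := by omega
  rw [show 6 * g₁ + 4 * s₁ + 2 * n₁ + 2 * T - 5 = 2 * a1 + 1 by omega,
    show 6 * g₂ + 4 * s₂ + 2 * n₂ + 2 * T - 5 = 2 * a2 + 1 by omega,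
    show 3 * g + n - (S + T) - 3 = a1 + a2 by omega,
    show g + 1 - (S + T) = g₁ + g₂ by omega,
    show 2 * g + n - S - 2 = x1 + x2 + 2 by omega,
    show 6 * g + 2 * n - 2 * (S + T) - 5 = 2 * (a1 + a2) + 1 by omega,
    show 3 * g₁ + 2 * s₁ + n₁ + T - 3 = a1 by omega,
    show 3 * g₂ + 2 * s₂ + n₂ + T - 3 = a2 by omega]
  set A := a1 + a2 with hA
  set G := g₁ + g₂ with hG
  set m := x1 + x2 with hm
  -- The key binomial inequality
  have N : A.choose a1 * (G.choose g₁ * S.choose s₁) * ((2*A+2) * (m+2)^r₀) ≤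
      2^(r₀+7) * (S+T+1) * Nat.factorial (r₀+1) * (2*A+2).choose (2*a1+1) := by
    -- v6
    have w1 : 2*A+2 ≤ 3*(m+2) + (S+T) := by omega
    have w2 : 2*A+2 ≤ 3*(S+T+1)*(m+2) := by
      calc 2*A+2 ≤ 3*(m+2) + (S+T) := w1
        _ ≤ 3*(m+2) + (S+T)*(3*(m+2)) := by
            exact Nat.add_le_add_left (Nat.le_mul_of_pos_right _ (by omega)) _
        _ = 3*(S+T+1)*(m+2) := by ring
    obtain ⟨c, hc⟩ : ∃ c, m = r₀ + c := ⟨m - r₀, by omega⟩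
    have hrc : r₀ ≤ c := by omega
    have pb : 3*(m+2)^(r₀+1) ≤ 2^(r₀+7) * (Nat.factorial (r₀+1) * (m+1).choose (r₀+1)) := by
      rw [hc]; exact pow_bound r₀ c hrc
    set B := (m+1).choose (r₀+1) with hB
    have v6 : (2*A+2) * (m+2)^r₀ ≤ (S+T+1) * (2^(r₀+7) * (Nat.factorial (r₀+1) * B)) := by
      calc (2*A+2) * (m+2)^r₀ ≤ (3*(S+T+1)*(m+2)) * (m+2)^r₀ :=
            Nat.mul_le_mul_right _ w2
        _ = (S+T+1) * (3*(m+2)^(r₀+1)) := by ring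
        _ ≤ (S+T+1) * (2^(r₀+7) * (Nat.factorial (r₀+1) * B)) :=
            Nat.mul_le_mul_left _ pb
    have u1 : B ≤ (m+1).choose (x1+1) := choose_mono_mid (by omega) (by omega)
    have u2 : (G+S).choose (g₁+s₁) * (m+1).choose (x1+1) ≤ (A+1).choose (a1+1) := by
      have := cmcl (G+S) (g₁+s₁) (m+1) (x1+1)
      rwa [show G+S+(m+1) = A+1 by omega, show g₁+s₁+(x1+1) = a1+1 by omega] at this
    have u3 : G.choose g₁ * S.choose s₁ ≤ (G+S).choose (g₁+s₁) := cmcl G g₁ S s₁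
    have u4 : A.choose a1 ≤ (A+1).choose a1 := Nat.choose_le_choose a1 (by omega)
    have u5 : (A+1).choose a1 * (A+1).choose (a1+1) ≤ (2*A+2).choose (2*a1+1) := by
      have := cmcl (A+1) a1 (A+1) (a1+1)
      rwa [show A+1+(A+1) = 2*A+2 by omega, show a1+(a1+1) = 2*a1+1 by omega] at this
    calc A.choose a1 * (G.choose g₁ * S.choose s₁) * ((2*A+2) * (m+2)^r₀)
        ≤ A.choose a1 * (G.choose g₁ * S.choose s₁) *
            ((S+T+1) * (2^(r₀+7) * (Nat.factorial (r₀+1) * B))) :=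
          Nat.mul_le_mul_left _ v6
      _ = 2^(r₀+7) * (S+T+1) * Nat.factorial (r₀+1) *
            (A.choose a1 * (G.choose g₁ * S.choose s₁ * B)) := by ring
      _ ≤ 2^(r₀+7) * (S+T+1) * Nat.factorial (r₀+1) *
            ((A+1).choose a1 * (A+1).choose (a1+1)) := by
          refine Nat.mul_le_mul_left _ (Nat.mul_le_mul u4 ?_)
          calc G.choose g₁ * S.choose s₁ * B
              ≤ (G+S).choose (g₁+s₁) * (m+1).choose (x1+1) := Nat.mul_le_mul u3 u1
            _ ≤ (A+1).choose (a1+1) := u2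
      _ ≤ 2^(r₀+7) * (S+T+1) * Nat.factorial (r₀+1) * (2*A+2).choose (2*a1+1) :=
          Nat.mul_le_mul_left _ u5
  -- Assemble: multiply N by the product of small factorials
  have eA : A.choose a1 * Nat.factorial a1 * Nat.factorial a2 = Nat.factorial A := by
    have := Nat.choose_mul_factorial_mul_factorial (show a1 ≤ A by omega)
    rwa [show A - a1 = a2 by omega] at this
  have eG : G.choose g₁ * Nat.factorial g₁ * Nat.factorial g₂ = Nat.factorial G := by
    have := Nat.choose_mul_factorial_mul_factorial (show g₁ ≤ G by omega)
    rwa [show G - g₁ = g₂ by omega] at this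
  have eS : S.choose s₁ * Nat.factorial s₁ * Nat.factorial s₂ = Nat.factorial S := by
    have := Nat.choose_mul_factorial_mul_factorial (show s₁ ≤ S by omega)
    rwa [show S - s₁ = s₂ by omega] at this
  have e2 : (2*A+2).choose (2*a1+1) * Nat.factorial (2*a1+1) * Nat.factorial (2*a2+1)
      = Nat.factorial (2*A+2) := by
    have := Nat.choose_mul_factorial_mul_factorial (show 2*a1+1 ≤ 2*A+2 by omega)
    rwa [show 2*A+2 - (2*a1+1) = 2*a2+1 by omega] at this
  have e3 : Nat.factorial (2*A+2) = (2*A+2) * Nat.factorial (2*A+1) := by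
    rw [show 2*A+2 = (2*A+1)+1 by omega, Nat.factorial_succ]
  refine Nat.le_of_mul_le_mul_left ?_ (show 0 < 2*A+2 by omega)
  calc (2*A+2) * (Nat.factorial (2*a1+1) * Nat.factorial (2*a2+1) * Nat.factorial A *
        Nat.factorial G * Nat.factorial S * (m+2)^r₀)
      = (A.choose a1 * (G.choose g₁ * S.choose s₁) * ((2*A+2) * (m+2)^r₀)) *
        (Nat.factorial a1 * Nat.factorial a2 * Nat.factorial g₁ * Nat.factorial g₂ *
          Nat.factorial s₁ * Nat.factorial s₂ *
          (Nat.factorial (2*a1+1) * Nat.factorial (2*a2+1))) := by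
        rw [← eA, ← eG, ← eS]; ring
    _ ≤ (2^(r₀+7) * (S+T+1) * Nat.factorial (r₀+1) * (2*A+2).choose (2*a1+1)) *
        (Nat.factorial a1 * Nat.factorial a2 * Nat.factorial g₁ * Nat.factorial g₂ *
          Nat.factorial s₁ * Nat.factorial s₂ *
          (Nat.factorial (2*a1+1) * Nat.factorial (2*a2+1))) :=
        Nat.mul_le_mul_right _ N
    _ = 2^(r₀+7) * (S+T+1) * Nat.factorial (r₀+1) *
        ((2*A+2).choose (2*a1+1) * Nat.factorial (2*a1+1) * Nat.factorial (2*a2+1)) *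
        (Nat.factorial a1 * Nat.factorial a2 * Nat.factorial g₁ * Nat.factorial g₂ *
          Nat.factorial s₁ * Nat.factorial s₂) := by ring
    _ = (2*A+2) * (2^(r₀+7) * (S+T+1) * Nat.factorial (r₀+1) * Nat.factorial (2*A+1) *
        (Nat.factorial a1 * Nat.factorial a2 * Nat.factorial g₁ * Nat.factorial g₂ *
          Nat.factorial s₁ * Nat.factorial s₂)) := by rw [e2, e3]; ring

/-- With `E = S + T ≤ 3g + n − 3`, `g₁ + g₂ = g − E + 1`,
`s₁ + s₂ = S`, `n₁ + n₂ = n`, `2gᵢ + 2sᵢ + nᵢ + T ≥ 3` for `i = 1, 2`, and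
`r₀ ≥ 0` with `r₀ ≤ min(2g₁+s₁+n₁+T−3, 2g₂+s₂+n₂+T−3)`:
`∏_{i=1}^2 (6gᵢ+4sᵢ+2nᵢ+2T−5)!/((3gᵢ+2sᵢ+nᵢ+T−3)! gᵢ! sᵢ!)
  ≤ 2^{r₀+7} (E+1) (2g+n−S−2)^{−r₀} (r₀+1)! (6g+2n−2E−5)!/((3g+n−E−3)! (g−E+1)! S!)`. -/
theorem stmt18 (g n S T : ℕ) (hg : 2 ≤ g) (hT : 1 ≤ T)
    (hE : S + T + 3 ≤ 3 * g + n)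
    (g₁ g₂ s₁ s₂ n₁ n₂ : ℕ)
    (hgsum : g₁ + g₂ + (S + T) = g + 1)
    (hssum : s₁ + s₂ = S) (hnsum : n₁ + n₂ = n)
    (h1 : 3 ≤ 2 * g₁ + 2 * s₁ + n₁ + T) (h2 : 3 ≤ 2 * g₂ + 2 * s₂ + n₂ + T)
    (r₀ : ℕ)
    (hr1 : r₀ + 3 ≤ 2 * g₁ + s₁ + n₁ + T) (hr2 : r₀ + 3 ≤ 2 * g₂ + s₂ + n₂ + T) :
    (Nat.factorial (6 * g₁ + 4 * s₁ + 2 * n₁ + 2 * T - 5) : ℝ) /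
        ((Nat.factorial (3 * g₁ + 2 * s₁ + n₁ + T - 3) : ℝ) *
          (Nat.factorial g₁ : ℝ) * (Nat.factorial s₁ : ℝ)) *
      ((Nat.factorial (6 * g₂ + 4 * s₂ + 2 * n₂ + 2 * T - 5) : ℝ) /
        ((Nat.factorial (3 * g₂ + 2 * s₂ + n₂ + T - 3) : ℝ) *
          (Nat.factorial g₂ : ℝ) * (Nat.factorial s₂ : ℝ))) ≤
      2 ^ (r₀ + 7) * ((S : ℝ) + (T : ℝ) + 1) *
        ((2 * g + n - S - 2 : ℕ) : ℝ) ^ (-(r₀ : ℝ)) *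
        (Nat.factorial (r₀ + 1) : ℝ) *
        (Nat.factorial (6 * g + 2 * n - 2 * (S + T) - 5) : ℝ) /
        ((Nat.factorial (3 * g + n - (S + T) - 3) : ℝ) *
          (Nat.factorial (g + 1 - (S + T)) : ℝ) * (Nat.factorial S : ℝ)) := by
  -- the natural-number inequality
  have MN : Nat.factorial (6 * g₁ + 4 * s₁ + 2 * n₁ + 2 * T - 5) *
      Nat.factorial (6 * g₂ + 4 * s₂ + 2 * n₂ + 2 * T - 5) *
      Nat.factorial (3 * g + n - (S + T) - 3) *
      Nat.factorial (g + 1 - (S + T)) * Nat.factorial S *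
      (2 * g + n - S - 2) ^ r₀ ≤
      2 ^ (r₀ + 7) * (S + T + 1) * Nat.factorial (r₀ + 1) *
      Nat.factorial (6 * g + 2 * n - 2 * (S + T) - 5) *
      (Nat.factorial (3 * g₁ + 2 * s₁ + n₁ + T - 3) *
        Nat.factorial (3 * g₂ + 2 * s₂ + n₂ + T - 3) *
        Nat.factorial g₁ * Nat.factorial g₂ *
        Nat.factorial s₁ * Nat.factorial s₂) := by
    rcases le_total (2 * g₁ + s₁ + n₁) (2 * g₂ + s₂ + n₂) with hw | hw
    · exact natkey g n S T hT g₁ g₂ s₁ s₂ n₁ n₂ hgsum hssum hnsum r₀ hr1 hr2 hw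
    · have h := natkey g n S T hT g₂ g₁ s₂ s₁ n₂ n₁ (by omega) (by omega) (by omega)
        r₀ hr2 hr1 hw
      calc Nat.factorial (6 * g₁ + 4 * s₁ + 2 * n₁ + 2 * T - 5) *
            Nat.factorial (6 * g₂ + 4 * s₂ + 2 * n₂ + 2 * T - 5) *
            Nat.factorial (3 * g + n - (S + T) - 3) *
            Nat.factorial (g + 1 - (S + T)) * Nat.factorial S *
            (2 * g + n - S - 2) ^ r₀
          = Nat.factorial (6 * g₂ + 4 * s₂ + 2 * n₂ + 2 * T - 5) *
            Nat.factorial (6 * g₁ + 4 * s₁ + 2 * n₁ + 2 * T - 5) *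
            Nat.factorial (3 * g + n - (S + T) - 3) *
            Nat.factorial (g + 1 - (S + T)) * Nat.factorial S *
            (2 * g + n - S - 2) ^ r₀ := by ring
        _ ≤ 2 ^ (r₀ + 7) * (S + T + 1) * Nat.factorial (r₀ + 1) *
            Nat.factorial (6 * g + 2 * n - 2 * (S + T) - 5) *
            (Nat.factorial (3 * g₂ + 2 * s₂ + n₂ + T - 3) *
              Nat.factorial (3 * g₁ + 2 * s₁ + n₁ + T - 3) *
              Nat.factorial g₂ * Nat.factorial g₁ *
              Nat.factorial s₂ * Nat.factorial s₁) := h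
        _ = 2 ^ (r₀ + 7) * (S + T + 1) * Nat.factorial (r₀ + 1) *
            Nat.factorial (6 * g + 2 * n - 2 * (S + T) - 5) *
            (Nat.factorial (3 * g₁ + 2 * s₁ + n₁ + T - 3) *
              Nat.factorial (3 * g₂ + 2 * s₂ + n₂ + T - 3) *
              Nat.factorial g₁ * Nat.factorial g₂ *
              Nat.factorial s₁ * Nat.factorial s₂) := by ring
  -- positivity facts
  have fpos : ∀ k : ℕ, (0:ℝ) < (Nat.factorial k : ℝ) := fun k => by
    exact_mod_cast k.factorial_pos
  have hKnat : 0 < 2 * g + n - S - 2 := by omega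
  have hKR : (0:ℝ) < ((2 * g + n - S - 2 : ℕ) : ℝ) := by exact_mod_cast hKnat
  rw [Real.rpow_neg hKR.le, Real.rpow_natCast, div_mul_div_comm,
    div_le_div_iff₀ (by positivity) (by positivity)]
  have cast := (Nat.cast_le (α := ℝ)).mpr MN
  push_cast at cast
  have goal' : (Nat.factorial (6 * g₁ + 4 * s₁ + 2 * n₁ + 2 * T - 5) : ℝ) *
      (Nat.factorial (6 * g₂ + 4 * s₂ + 2 * n₂ + 2 * T - 5) : ℝ) *
      ((Nat.factorial (3 * g + n - (S + T) - 3) : ℝ) *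
        (Nat.factorial (g + 1 - (S + T)) : ℝ) * (Nat.factorial S : ℝ)) *
      ((2 * g + n - S - 2 : ℕ) : ℝ) ^ r₀ ≤
      2 ^ (r₀ + 7) * ((S:ℝ) + (T:ℝ) + 1) * (Nat.factorial (r₀ + 1) : ℝ) *
      (Nat.factorial (6 * g + 2 * n - 2 * (S + T) - 5) : ℝ) *
      ((Nat.factorial (3 * g₁ + 2 * s₁ + n₁ + T - 3) : ℝ) *
        (Nat.factorial g₁ : ℝ) * (Nat.factorial s₁ : ℝ) *
        ((Nat.factorial (3 * g₂ + 2 * s₂ + n₂ + T - 3) : ℝ) *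
          (Nat.factorial g₂ : ℝ) * (Nat.factorial s₂ : ℝ))) := by
    calc (Nat.factorial (6 * g₁ + 4 * s₁ + 2 * n₁ + 2 * T - 5) : ℝ) *
        (Nat.factorial (6 * g₂ + 4 * s₂ + 2 * n₂ + 2 * T - 5) : ℝ) *
        ((Nat.factorial (3 * g + n - (S + T) - 3) : ℝ) *
          (Nat.factorial (g + 1 - (S + T)) : ℝ) * (Nat.factorial S : ℝ)) *
        ((2 * g + n - S - 2 : ℕ) : ℝ) ^ r₀
        = (Nat.factorial (6 * g₁ + 4 * s₁ + 2 * n₁ + 2 * T - 5) : ℝ) *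
          (Nat.factorial (6 * g₂ + 4 * s₂ + 2 * n₂ + 2 * T - 5) : ℝ) *
          (Nat.factorial (3 * g + n - (S + T) - 3) : ℝ) *
          (Nat.factorial (g + 1 - (S + T)) : ℝ) * (Nat.factorial S : ℝ) *
          ((2 * g + n - S - 2 : ℕ) : ℝ) ^ r₀ := by ring
      _ ≤ 2 ^ (r₀ + 7) * ((S:ℝ) + (T:ℝ) + 1) * (Nat.factorial (r₀ + 1) : ℝ) *
          (Nat.factorial (6 * g + 2 * n - 2 * (S + T) - 5) : ℝ) *
          ((Nat.factorial (3 * g₁ + 2 * s₁ + n₁ + T - 3) : ℝ) *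
            (Nat.factorial (3 * g₂ + 2 * s₂ + n₂ + T - 3) : ℝ) *
            (Nat.factorial g₁ : ℝ) * (Nat.factorial g₂ : ℝ) *
            (Nat.factorial s₁ : ℝ) * (Nat.factorial s₂ : ℝ)) := cast
      _ = _ := by ring
  calc (Nat.factorial (6 * g₁ + 4 * s₁ + 2 * n₁ + 2 * T - 5) : ℝ) *
      (Nat.factorial (6 * g₂ + 4 * s₂ + 2 * n₂ + 2 * T - 5) : ℝ) *
      ((Nat.factorial (3 * g + n - (S + T) - 3) : ℝ) *
        (Nat.factorial (g + 1 - (S + T)) : ℝ) * (Nat.factorial S : ℝ))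
      = ((Nat.factorial (6 * g₁ + 4 * s₁ + 2 * n₁ + 2 * T - 5) : ℝ) *
        (Nat.factorial (6 * g₂ + 4 * s₂ + 2 * n₂ + 2 * T - 5) : ℝ) *
        ((Nat.factorial (3 * g + n - (S + T) - 3) : ℝ) *
          (Nat.factorial (g + 1 - (S + T)) : ℝ) * (Nat.factorial S : ℝ)) *
        ((2 * g + n - S - 2 : ℕ) : ℝ) ^ r₀) *
        (((2 * g + n - S - 2 : ℕ) : ℝ) ^ r₀)⁻¹ := by
        field_simp
    _ ≤ (2 ^ (r₀ + 7) * ((S:ℝ) + (T:ℝ) + 1) * (Nat.factorial (r₀ + 1) : ℝ) *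
        (Nat.factorial (6 * g + 2 * n - 2 * (S + T) - 5) : ℝ) *
        ((Nat.factorial (3 * g₁ + 2 * s₁ + n₁ + T - 3) : ℝ) *
          (Nat.factorial g₁ : ℝ) * (Nat.factorial s₁ : ℝ) *
          ((Nat.factorial (3 * g₂ + 2 * s₂ + n₂ + T - 3) : ℝ) *
            (Nat.factorial g₂ : ℝ) * (Nat.factorial s₂ : ℝ)))) *
        (((2 * g + n - S - 2 : ℕ) : ℝ) ^ r₀)⁻¹ := by
        exact mul_le_mul_of_nonneg_right goal' (by positivity)
    _ = _ := by ring
end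

section
/- Fix integers n₁, n₂ ≥ 1 and g₁, g₂ ≥ 2; set n = n₁ + n₂ − 2 and g = g₁ + g₂. Then binom(4g + n − 4, 4g₁ + n₁ − 3) · binom(6g + 2n − 8, 6g₁ + 2n₁ − 6)^{−1} ≤ 1/g; equivalently, g · binom(4g + n − 4, 4g₁ + n₁ − 3) ≤ binom(6g + 2n − 8, 6g₁ + 2n₁ − 6). -/
open Finset Finset.Nat

theorem stmt19_aux_vander (m n i j : ℕ) :
    m.choose i * n.choose j ≤ (m + n).choose (i + j) := by
  rw [Nat.add_choose_eq]
  have hm : (i, j) ∈ antidiagonal (i + j) := by simp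
  exact Finset.single_le_sum (f := fun ij : ℕ × ℕ => m.choose ij.1 * n.choose ij.2)
    (fun _ _ => Nat.zero_le _) hm

theorem stmt19_aux_key (a b c d : ℕ) :
    (c + d + 4) * Nat.choose (4*c+4*d+a+b+12) (4*c+a+6) ≤
      Nat.choose (6*c+6*d+2*a+2*b+16) (6*c+2*a+8) := by
  have h1 : Nat.choose (2*c+a+2) (2*c+a+1) = 2*c+a+2 := by
    have := Nat.choose_succ_self_right (2*c+a+1)
    simpa [Nat.add_assoc] using this
  have h2 : Nat.choose (2*d+b+2) 1 = 2*d+b+2 := Nat.choose_one_right _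
  calc (c + d + 4) * Nat.choose (4*c+4*d+a+b+12) (4*c+a+6)
      ≤ ((2*c+a+2) * (2*d+b+2)) * Nat.choose (4*c+4*d+a+b+12) (4*c+a+6) := by
        apply Nat.mul_le_mul_right
        nlinarith
    _ = Nat.choose (4*c+4*d+a+b+12) (4*c+a+6) * Nat.choose (2*c+a+2) (2*c+a+1)
          * Nat.choose (2*d+b+2) 1 := by rw [h1, h2]; ring
    _ ≤ Nat.choose ((4*c+4*d+a+b+12) + (2*c+a+2)) ((4*c+a+6) + (2*c+a+1))
          * Nat.choose (2*d+b+2) 1 :=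
        Nat.mul_le_mul_right _ (stmt19_aux_vander _ _ _ _)
    _ ≤ Nat.choose (((4*c+4*d+a+b+12) + (2*c+a+2)) + (2*d+b+2))
          (((4*c+a+6) + (2*c+a+1)) + 1) := stmt19_aux_vander _ _ _ _
    _ = Nat.choose (6*c+6*d+2*a+2*b+16) (6*c+2*a+8) := by ring_nf

/-- For integers `n₁, n₂ ≥ 1` and `g₁, g₂ ≥ 2`, with
`n = n₁ + n₂ − 2` and `g = g₁ + g₂`:
`C(4g+n−4, 4g₁+n₁−3) / C(6g+2n−8, 6g₁+2n₁−6) ≤ 1/g`. -/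
theorem stmt19 (n₁ n₂ g₁ g₂ : ℕ) (hn₁ : 1 ≤ n₁) (hn₂ : 1 ≤ n₂)
    (hg₁ : 2 ≤ g₁) (hg₂ : 2 ≤ g₂) :
    (Nat.choose (4 * (g₁ + g₂) + (n₁ + n₂ - 2) - 4) (4 * g₁ + n₁ - 3) : ℝ) /
        (Nat.choose (6 * (g₁ + g₂) + 2 * (n₁ + n₂ - 2) - 8) (6 * g₁ + 2 * n₁ - 6) : ℝ) ≤
      1 / ((g₁ : ℝ) + (g₂ : ℝ)) := by
  obtain ⟨a, rfl⟩ : ∃ a, n₁ = a + 1 := ⟨n₁ - 1, by omega⟩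
  obtain ⟨b, rfl⟩ : ∃ b, n₂ = b + 1 := ⟨n₂ - 1, by omega⟩
  obtain ⟨c, rfl⟩ : ∃ c, g₁ = c + 2 := ⟨g₁ - 2, by omega⟩
  obtain ⟨d, rfl⟩ : ∃ d, g₂ = d + 2 := ⟨g₂ - 2, by omega⟩
  have e1 : 4 * ((c+2) + (d+2)) + ((a+1) + (b+1) - 2) - 4 = 4*c+4*d+a+b+12 := by omega
  have e2 : 4 * (c+2) + (a+1) - 3 = 4*c+a+6 := by omega
  have e3 : 6 * ((c+2) + (d+2)) + 2 * ((a+1) + (b+1) - 2) - 8 = 6*c+6*d+2*a+2*b+16 := by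
    omega
  have e4 : 6 * (c+2) + 2 * (a+1) - 6 = 6*c+2*a+8 := by omega
  rw [e1, e2, e3, e4]
  have hkey := stmt19_aux_key a b c d
  have hpos : 0 < Nat.choose (6*c+6*d+2*a+2*b+16) (6*c+2*a+8) :=
    Nat.choose_pos (by omega)
  have hpos' : (0:ℝ) < (Nat.choose (6*c+6*d+2*a+2*b+16) (6*c+2*a+8) : ℝ) := by
    exact_mod_cast hpos
  have hg : (0:ℝ) < ((c+2 : ℕ):ℝ) + ((d+2 : ℕ):ℝ) :=
    add_pos (by exact_mod_cast Nat.succ_pos (c+1)) (by exact_mod_cast Nat.succ_pos (d+1))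
  rw [div_le_div_iff₀ hpos' hg, one_mul]
  have hcast : ((c+2 : ℕ):ℝ) + ((d+2 : ℕ):ℝ) = ((c+d+4 : ℕ) : ℝ) := by
    push_cast; ring
  rw [hcast, mul_comm]
  exact_mod_cast hkey
end
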